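/- Let (X, ‖·‖) be a finite-dimensional inner product space, a > 0, and let U be a nonempty open subset of the sphere S(a) = {v ∈ X : ‖v‖ = a}. Then U determines the inner product on X; i.e., if two inner products on X give rise to spheres of radius a that share a common nonempty relatively open subset, the inner products coincide. -/
import Mathlib


open Set Metric

/-- on a finite-dimensional real vector space, any nonempty relatively
open subset of the sphere of radius `a > 0` of an inner product determines the inner
product: if the spheres of two (symmetric positive definite bilinear) inner products
share a common nonempty relatively open subset, the inner products coincide. -/
theorem stmt15 {X : Type*} [NormedAddCommGroup X] [NormedSpace ℝ X]
    [FiniteDimensional ℝ X]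
    (f₁ f₂ : X →ₗ[ℝ] X →ₗ[ℝ] ℝ)
    (h₁s : ∀ u v, f₁ u v = f₁ v u) (h₂s : ∀ u v, f₂ u v = f₂ v u)
    (h₁p : ∀ v, v ≠ 0 → 0 < f₁ v v) (h₂p : ∀ v, v ≠ 0 → 0 < f₂ v v)
    (a : ℝ) (ha : 0 < a)
    (U : Set X) (hne : U.Nonempty)
    (hopen : ∃ O : Set X, IsOpen O ∧ U = O ∩ {v | f₁ v v = a ^ 2})
    (hsub : U ⊆ {v | f₂ v v = a ^ 2}) :
    f₁ = f₂ := by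
  obtain ⟨u, hu⟩ := hne
  obtain ⟨O, hO, hUO⟩ := hopen
  have huO : u ∈ O := by rw [hUO] at hu; exact hu.1
  have hu1 : f₁ u u = a ^ 2 := by rw [hUO] at hu; exact hu.2
  have hu2 : f₂ u u = a ^ 2 := hsub hu
  -- expansion lemma
  have expand : ∀ (f : X →ₗ[ℝ] X →ₗ[ℝ] ℝ), (∀ x y, f x y = f y x) → ∀ (w : X) (t : ℝ),
      f (u + t • w) (u + t • w) = f u u + t * (2 * f u w) + t ^ 2 * f w w := by
    intro f hs w t
    simp only [map_add, map_smul, smul_eq_mul, LinearMap.add_apply, LinearMap.smul_apply]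
    rw [hs w u]; ring
  -- diagonal equality
  have diag : ∀ w : X, f₁ w w = f₂ w w := by
    intro w
    set B1 : ℝ := 2 * f₁ u w with hB1
    set C1 : ℝ := f₁ w w with hC1
    set B2 : ℝ := 2 * f₂ u w with hB2
    set C2 : ℝ := f₂ w w with hC2
    set Q : ℝ → ℝ := fun t => a ^ 2 + t * B1 + t ^ 2 * C1 with hQdef
    have hQ : ∀ t, f₁ (u + t • w) (u + t • w) = Q t := by
      intro t; rw [expand f₁ h₁s w t, hu1]
    have hP : ∀ t, f₂ (u + t • w) (u + t • w) = a ^ 2 + t * B2 + t ^ 2 * C2 := by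
      intro t; rw [expand f₂ h₂s w t, hu2]
    have hQcont : Continuous Q := by fun_prop
    have hQ0 : Q 0 = a ^ 2 := by simp [hQdef]
    set v : ℝ → X := fun t => (a / Real.sqrt (Q t)) • (u + t • w) with hvdef
    have hv0 : v 0 = u := by
      simp [hvdef, hQ0, Real.sqrt_sq ha.le, div_self ha.ne']
    have hvcont : ContinuousAt v 0 := by
      apply ContinuousAt.smul
      · apply ContinuousAt.div continuousAt_const
        · exact (Real.continuous_sqrt.comp hQcont).continuousAt
        · rw [hQ0, Real.sqrt_sq ha.le]; exact ha.ne'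
      · fun_prop
    have hS : (v ⁻¹' O ∩ Q ⁻¹' Ioi 0) ∈ nhds (0 : ℝ) := by
      apply Filter.inter_mem
      · exact hvcont.preimage_mem_nhds (hO.mem_nhds (hv0 ▸ huO))
      · apply hQcont.continuousAt.preimage_mem_nhds
        apply isOpen_Ioi.mem_nhds
        rw [hQ0]; exact pow_pos ha 2
    obtain ⟨ε, hε, hball⟩ := Metric.mem_nhds_iff.mp hS
    -- for |t| < ε, P t = Q t
    have key : ∀ t : ℝ, |t| < ε →
        a ^ 2 + t * B2 + t ^ 2 * C2 = Q t := by
      intro t ht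
      have htS : t ∈ v ⁻¹' O ∩ Q ⁻¹' Ioi 0 := by
        apply hball; simpa [Real.dist_eq] using ht
      have hQt : 0 < Q t := htS.2
      have hsqrt : Real.sqrt (Q t) * Real.sqrt (Q t) = Q t :=
        Real.mul_self_sqrt hQt.le
      have hf1 : f₁ (v t) (v t) = a ^ 2 := by
        simp only [hvdef, map_smul, LinearMap.smul_apply, smul_eq_mul]
        rw [hQ t]
        calc a / Real.sqrt (Q t) * (a / Real.sqrt (Q t) * Q t)
            = a ^ 2 * (Q t / (Real.sqrt (Q t) * Real.sqrt (Q t))) := by ring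
          _ = a ^ 2 := by rw [hsqrt, div_self hQt.ne', mul_one]
      have hvU : v t ∈ U := by
        rw [hUO]; exact ⟨htS.1, hf1⟩
      have hf2 : f₂ (v t) (v t) = a ^ 2 := hsub hvU
      have hf2c : f₂ (v t) (v t)
          = a ^ 2 * ((a ^ 2 + t * B2 + t ^ 2 * C2) / Q t) := by
        simp only [hvdef, map_smul, LinearMap.smul_apply, smul_eq_mul]
        rw [hP t]
        calc a / Real.sqrt (Q t) * (a / Real.sqrt (Q t) * (a ^ 2 + t * B2 + t ^ 2 * C2))
            = a ^ 2 * ((a ^ 2 + t * B2 + t ^ 2 * C2) / (Real.sqrt (Q t) * Real.sqrt (Q t))) := by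
              ring
          _ = _ := by rw [hsqrt]
      have ha2 : (a : ℝ) ^ 2 ≠ 0 := (pow_pos ha 2).ne'
      have hf2' : a ^ 2 * ((a ^ 2 + t * B2 + t ^ 2 * C2) / Q t) = a ^ 2 := by
        rw [← hf2c]; exact hf2
      have : (a ^ 2 + t * B2 + t ^ 2 * C2) / Q t = 1 := by
        have := mul_left_cancel₀ ha2 (hf2'.trans (mul_one (a ^ 2)).symm)
        exact this
      field_simp at this
      exact this
    have he : 0 < ε / 2 := by linarith
    have h1 := key (ε / 2) (by rw [abs_of_pos he]; linarith)
    have h2 := key (-(ε / 2)) (by rw [abs_neg, abs_of_pos he]; linarith)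
    simp only [hQdef] at h1 h2
    have hsum : (ε / 2) ^ 2 * (C2 - C1) = 0 := by nlinarith [h1, h2]
    have : C2 - C1 = 0 := by
      rcases mul_eq_zero.mp hsum with h | h
      · exact absurd h (pow_pos he 2).ne'
      · exact h
    rw [hC1, hC2] at this
    linarith
  -- polarization
  apply LinearMap.ext; intro x
  apply LinearMap.ext; intro y
  have hxy := diag (x + y)
  have hx := diag x
  have hy := diag y
  simp only [map_add, LinearMap.add_apply] at hxy
  rw [h₁s y x, h₂s y x] at hxy
  linarith
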